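/- Let S : [0,T] → ℝ be continuous, (π^n) the dyadic Lebesgue partitions generated by S, and for u ∈ ℝ and t ∈ [0,T] set L_t^{π^n}(u) = ∑_j 1_{⦇S(τ_j^n∧t), S(τ_{j+1}^n∧t)⦈}(u)|S(τ_{j+1}^n∧t) − u|. Then for every dyadic point u = k2^{−n}, L_t^{π^n}(u) = 2^{−n} D_t(u − 2^{−n}, u) + ε, where D_t(a,b) is the number of downcrossings of [a,b] by S on [0,t] and ε ∈ [0, 2^{−n}]. -/

import Mathlib

open Set Classical

/-- The dyadic grid `2^{-n}ℤ`. -/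
def dyadicGrid (n : ℕ) : Set ℝ := {x | ∃ m : ℤ, x = (m : ℝ) * 2 ^ (-(n : ℝ))}

/-- `⦇a,b⦈` : the half-open interval `(a,b]` if `a ≤ b`, and `(b,a]` otherwise. -/
noncomputable def hook (a b : ℝ) : Set ℝ := if a ≤ b then Set.Ioc a b else Set.Ioc b a

/-- The discrete local time of a path `S` along the partition `τ` at time `t` and level `u`. -/
noncomputable def discreteLocalTime (S : ℝ → ℝ) (τ : ℕ → ℝ) (t u : ℝ) : ℝ :=
  ∑' j : ℕ, if u ∈ hook (S (min (τ j) t)) (S (min (τ (j + 1)) t))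
            then |S (min (τ (j + 1)) t) - u| else 0

/-- The set of downcrossing pairs of `[a,b]` by `S` during `[0,t]`. -/
def downcrossingPairs (S : ℝ → ℝ) (t a b : ℝ) : Set (ℝ × ℝ) :=
  {p | p.1 ∈ Set.Icc 0 t ∧ p.2 ∈ Set.Icc 0 t ∧ p.1 < p.2 ∧
    S p.1 = b ∧ S p.2 = a ∧ ∀ w ∈ Set.Ioo p.1 p.2, S w ∈ Set.Ioo a b}

/-!
Write `h = 2^{-n}`. For `j ≥ 1` the value `S (τ j)` is a lattice point of `hℤ`, and on
`[τ j, τ (j+1))` the path takes no lattice value other than `S (τ j)`; by the intermediate value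
theorem it stays within distance `h` of `S (τ j)`, and `S (τ (j+1)) = S (τ j) ± h`. Hence a completed
step contributes to the local time at the lattice level `u` exactly when it goes down from `u` to
`u - h`, and then it contributes `h`. Such steps correspond bijectively to the downcrossings of
`[u - h, u]` (a downcrossing ends at the hitting time closing the step and starts at the last visit
to `u` before it), and the single step straddling `t` contributes some `ε ∈ [0, h]`.
-/

lemma dyadicGrid_eq_zmultiples (n : ℕ) :
    dyadicGrid n = AddSubgroup.zmultiples ((2 : ℝ) ^ (-(n : ℝ))) := by
  ext x
  simp [dyadicGrid, AddSubgroup.mem_zmultiples_iff, eq_comm]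

lemma abs_le_abs_sub_of_mem_zmultiples {h x y : ℝ} (hx : x ∈ AddSubgroup.zmultiples h)
    (hy : y ∈ AddSubgroup.zmultiples h) (hxy : x ≠ y) : |h| ≤ |x - y| := by
  obtain ⟨k, hk⟩ := AddSubgroup.mem_zmultiples_iff.mp (sub_mem hx hy)
  have hk0 : k ≠ 0 := by
    rintro rfl
    exact hxy (sub_eq_zero.mp (by simpa using hk.symm))
  rw [← hk, zsmul_eq_mul, abs_mul]
  exact le_mul_of_one_le_left (abs_nonneg h) (by exact_mod_cast Int.one_le_abs hk0)

lemma exists_mem_Ico_succ {α : Type*} [LinearOrder α] {τ : ℕ → α} {s : α} (h0 : τ 0 ≤ s)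
    {N : ℕ} (hN : s < τ N) : ∃ j, s ∈ Ico (τ j) (τ (j + 1)) := by
  induction N with
  | zero => exact absurd hN h0.not_gt
  | succ m ih =>
    by_cases hm : s < τ m
    · exact ih hm
    · exact ⟨m, le_of_not_gt hm, hN⟩

lemma exists_downcrossing {S : ℝ → ℝ} (hS : Continuous S) {a b x y : ℝ} (hab : a < b)
    (hxy : x ≤ y) (hx : S x = b) (hy : S y = a) (habove : ∀ w ∈ Ico x y, a < S w) :
    ∃ p ∈ Ico x y, S p = b ∧ ∀ w ∈ Ioo p y, S w ∈ Ioo a b := by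
  -- start from the last visit to `b` before `y`
  have hK : IsCompact (Icc x y ∩ S ⁻¹' {b}) :=
    isCompact_Icc.inter_right (isClosed_singleton.preimage hS)
  obtain ⟨⟨hxp, hpy⟩, hp⟩ := hK.sSup_mem ⟨x, ⟨le_rfl, hxy⟩, hx⟩
  set p := sSup (Icc x y ∩ S ⁻¹' {b})
  have hp : S p = b := hp
  have hpy : p < y := hpy.lt_of_ne fun he => by rw [he, hy] at hp; linarith
  refine ⟨p, ⟨hxp, hpy⟩, hp, fun w hw => ⟨habove w ⟨hxp.trans hw.1.le, hw.2⟩, ?_⟩⟩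
  by_contra! hbw
  obtain ⟨w', hw', hSw'⟩ := intermediate_value_Icc' hw.2.le hS.continuousOn ⟨hy ▸ hab.le, hbw⟩
  exact (le_csSup hK.bddAbove ⟨⟨hxp.trans (hw.1.le.trans hw'.1), hw'.2⟩, hSw'⟩).not_gt
    (hw.1.trans_le hw'.1)

lemma injOn_snd_downcrossingPairs (S : ℝ → ℝ) (t a b : ℝ) :
    InjOn Prod.snd (downcrossingPairs S t a b) := by
  rintro ⟨p, q⟩ ⟨-, -, hpq, hSp, -, hin⟩ ⟨p', q'⟩ ⟨-, -, hpq', hSp', -, hin'⟩ hq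
  obtain rfl : q = q' := hq
  rcases lt_trichotomy p p' with hlt | rfl | hlt
  · exact absurd hSp' (hin p' ⟨hlt, hpq'⟩).2.ne
  · rfl
  · exact absurd hSp (hin' p ⟨hlt, hpq⟩).2.ne

noncomputable def localTimeTerm (a b u : ℝ) : ℝ := if u ∈ hook a b then |b - u| else 0

lemma localTimeTerm_self (a u : ℝ) : localTimeTerm a a u = 0 := by
  simp [localTimeTerm, hook]

lemma localTimeTerm_eq_ite {a b u : ℝ} (h : u ∈ uIcc a b → u = a ∨ u = b) :
    localTimeTerm a b u = if a = u ∧ b < u then u - b else 0 := by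
  have hhook : hook a b = Ioc (min a b) (max a b) := by
    unfold hook; split_ifs with hab
    · rw [min_eq_left hab, max_eq_right hab]
    · rw [min_eq_right (le_of_not_ge hab), max_eq_left (le_of_not_ge hab)]
  unfold localTimeTerm
  rw [hhook]
  split_ifs with hu hc hc
  · rw [abs_of_neg (sub_neg.2 hc.2)]; ring
  · rcases h (Ioc_subset_Icc_self hu) with rfl | rfl
    · simp only [true_and, not_lt] at hc
      exact absurd hu.1 (by simp [hc])
    · simp
  · obtain ⟨rfl, hlt⟩ := hc
    exact absurd ⟨min_lt_iff.2 (Or.inr hlt), le_max_left _ _⟩ hu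
  · rfl

/-- `τ (j + 1) = sInf (hitSet S h (τ j))` defines the Lebesgue partition along the lattice `hℤ`. -/
def hitSet (S : ℝ → ℝ) (h a : ℝ) : Set ℝ :=
  {s | a ≤ s ∧ S s ∈ AddSubgroup.zmultiples h ∧ S s ≠ S a}

section HittingTimes

variable {S : ℝ → ℝ} {h a b s : ℝ}

lemma isLeast_sInf_hitSet (hS : Continuous S) (hh : h ≠ 0) (hne : (hitSet S h a).Nonempty) :
    IsLeast (hitSet S h a) (sInf (hitSet S h a)) := by
  have hbdd : BddBelow (hitSet S h a) := ⟨a, fun s hs => hs.1⟩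
  have hsub : hitSet S h a ⊆ Ici a ∩ S ⁻¹' AddSubgroup.zmultiples h := fun s hs => ⟨hs.1, hs.2.1⟩
  have hclosed : IsClosed (Ici a ∩ S ⁻¹' AddSubgroup.zmultiples h) :=
    isClosed_Ici.inter (AddSubgroup.isClosed_of_discrete.preimage hS)
  obtain ⟨hac, hc⟩ := closure_minimal hsub hclosed (csInf_mem_closure hne hbdd)
  refine ⟨⟨hac, hc, fun hca => ?_⟩, fun s hs => csInf_le hbdd hs⟩
  -- points of `hitSet` just above the infimum have lattice values `≠ S (sInf _)`, at distance `≥ |h|`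
  obtain ⟨δ, hδ, hcont⟩ := Metric.continuous_iff.mp hS _ |h| (abs_pos.mpr hh)
  obtain ⟨s, hs, hsc⟩ := (csInf_lt_iff hbdd hne).mp (lt_add_of_pos_right _ hδ)
  have hdist := hcont s <| by
    rw [Real.dist_eq, abs_of_nonneg (sub_nonneg.2 (csInf_le hbdd hs))]
    linarith
  rw [Real.dist_eq] at hdist
  exact (abs_le_abs_sub_of_mem_zmultiples hs.2.1 hc (hca ▸ hs.2.2)).not_gt hdist

lemma eq_of_mem_Ico_of_isLeast_hitSet (hab : IsLeast (hitSet S h a) b) (hs : s ∈ Ico a b)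
    (hSs : S s ∈ AddSubgroup.zmultiples h) : S s = S a := by
  by_contra hne
  exact (hab.2 ⟨hs.1, hSs, hne⟩).not_gt hs.2

lemma eq_or_eq_of_mem_uIcc_of_isLeast_hitSet (hS : Continuous S)
    (hab : IsLeast (hitSet S h a) b) (hs : s ∈ Icc a b) {x : ℝ}
    (hx : x ∈ AddSubgroup.zmultiples h) (hxs : x ∈ uIcc (S a) (S s)) : x = S a ∨ x = S s := by
  obtain ⟨w, hw, rfl⟩ := intermediate_value_uIcc hS.continuousOn hxs
  rw [uIcc_of_le hs.1] at hw
  rcases hw.2.eq_or_lt with rfl | hws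
  · exact Or.inr rfl
  · exact Or.inl (eq_of_mem_Ico_of_isLeast_hitSet hab ⟨hw.1, hws.trans_le hs.2⟩ hx)

lemma abs_sub_le_of_mem_Icc_of_isLeast_hitSet (hS : Continuous S) (hh : 0 < h)
    (hab : IsLeast (hitSet S h a) b) (ha : S a ∈ AddSubgroup.zmultiples h) (hs : s ∈ Icc a b) :
    |S s - S a| ≤ h := by
  have hmem := AddSubgroup.mem_zmultiples h
  rw [abs_sub_le_iff]
  constructor <;> by_contra! hlt
  · rcases eq_or_eq_of_mem_uIcc_of_isLeast_hitSet hS hab hs (add_mem ha hmem)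
      (mem_uIcc_of_le (by linarith) (by linarith)) with hx | hx <;> linarith
  · rcases eq_or_eq_of_mem_uIcc_of_isLeast_hitSet hS hab hs (sub_mem ha hmem)
      (mem_uIcc_of_ge (by linarith) (by linarith)) with hx | hx <;> linarith

lemma abs_sub_lt_of_mem_Ico_of_isLeast_hitSet (hS : Continuous S) (hh : 0 < h)
    (hab : IsLeast (hitSet S h a) b) (ha : S a ∈ AddSubgroup.zmultiples h) (hs : s ∈ Ico a b) :
    |S s - S a| < h := by
  refine (abs_sub_le_of_mem_Icc_of_isLeast_hitSet hS hh hab ha (Ico_subset_Icc_self hs)).lt_of_ne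
    fun heq => ?_
  have hSs : S s ∈ AddSubgroup.zmultiples h := by
    rcases abs_eq hh.le |>.mp heq with he | he
    · exact (eq_add_of_sub_eq' he) ▸ add_mem ha (AddSubgroup.mem_zmultiples h)
    · rw [show S s = S a - h by linarith]; exact sub_mem ha (AddSubgroup.mem_zmultiples h)
  rw [eq_of_mem_Ico_of_isLeast_hitSet hab hs hSs, sub_self, abs_zero] at heq
  exact hh.ne heq

lemma abs_sub_eq_of_isLeast_hitSet (hS : Continuous S) (hh : 0 < h)
    (hab : IsLeast (hitSet S h a) b) (ha : S a ∈ AddSubgroup.zmultiples h) :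
    |S b - S a| = h :=
  le_antisymm (abs_sub_le_of_mem_Icc_of_isLeast_hitSet hS hh hab ha (right_mem_Icc.2 hab.1.1))
    (abs_of_pos hh ▸ abs_le_abs_sub_of_mem_zmultiples hab.1.2.1 ha hab.1.2.2)

end HittingTimes

section LebesguePartition

variable {S : ℝ → ℝ} {h : ℝ} {τ : ℕ → ℝ}

lemma strictMono_of_isLeast_hitSet (hτ : ∀ j, IsLeast (hitSet S h (τ j)) (τ (j + 1))) :
    StrictMono τ :=
  strictMono_nat_of_lt_succ fun j =>
    (hτ j).1.1.lt_of_ne fun he => (hτ j).1.2.2 (congrArg S he).symm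

lemma exists_lt_of_isLeast_hitSet (hS : Continuous S) (hh : h ≠ 0)
    (hτ : ∀ j, IsLeast (hitSet S h (τ j)) (τ (j + 1))) (M : ℝ) : ∃ N, M < τ N := by
  by_contra! hM
  have hlim := tendsto_atTop_ciSup (strictMono_of_isLeast_hitSet hτ).monotone
    ⟨M, by rintro _ ⟨N, rfl⟩; exact hM N⟩
  obtain ⟨N, hN⟩ := Metric.cauchySeq_iff.mp ((hS.tendsto _).comp hlim).cauchySeq |h|
    (abs_pos.mpr hh)
  -- but consecutive values `S (τ (N + 1)) ≠ S (τ (N + 2))` are distinct lattice points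
  exact (abs_le_abs_sub_of_mem_zmultiples (hτ (N + 1)).1.2.1 (hτ N).1.2.1
    (hτ (N + 1)).1.2.2).not_gt (hN (N + 2) (by omega) (N + 1) (by omega))

lemma discreteLocalTime_eq_sum_add (hτ : Monotone τ) {t u : ℝ} {m : ℕ}
    (ht : t ∈ Ico (τ m) (τ (m + 1))) :
    discreteLocalTime S τ t u =
      ∑ j ∈ Finset.range m, localTimeTerm (S (τ j)) (S (τ (j + 1))) u +
        localTimeTerm (S (τ m)) (S t) u := by
  change ∑' j, localTimeTerm (S (min (τ j) t)) (S (min (τ (j + 1)) t)) u = _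
  rw [tsum_eq_sum (s := Finset.range (m + 1)) fun j hj => ?_, Finset.sum_range_succ,
    min_eq_left ht.1, min_eq_right ht.2.le]
  · refine congrArg (· + _) (Finset.sum_congr rfl fun j hj => ?_)
    have hj : j + 1 ≤ m := Finset.mem_range.mp hj
    rw [min_eq_left ((hτ (by omega : j ≤ m)).trans ht.1), min_eq_left ((hτ hj).trans ht.1)]
  · have hj : m + 1 ≤ j := by simpa using hj
    rw [min_eq_right (ht.2.le.trans (hτ hj)), min_eq_right (ht.2.le.trans (hτ (by omega))),
      localTimeTerm_self]

noncomputable def downSteps (S : ℝ → ℝ) (τ : ℕ → ℝ) (h u : ℝ) (m : ℕ) : Finset ℕ :=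
  (Finset.range m).filter fun j => S (τ j) = u ∧ S (τ (j + 1)) = u - h

lemma sum_localTimeTerm_eq_mul_card (hS : Continuous S) (hh : 0 < h)
    (hτ : ∀ j, IsLeast (hitSet S h (τ j)) (τ (j + 1))) {u : ℝ}
    (hu : u ∈ AddSubgroup.zmultiples h) (m : ℕ) :
    ∑ j ∈ Finset.range m, localTimeTerm (S (τ j)) (S (τ (j + 1))) u =
      h * (downSteps S τ h u m).card := by
  rw [downSteps, Finset.card_filter, Nat.cast_sum, Finset.mul_sum]
  refine Finset.sum_congr rfl fun j _ => ?_
  rw [localTimeTerm_eq_ite (eq_or_eq_of_mem_uIcc_of_isLeast_hitSet hS (hτ j)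
    (right_mem_Icc.2 (hτ j).1.1) hu)]
  by_cases hj : S (τ j) = u
  · have hstep := abs_sub_eq_of_isLeast_hitSet hS hh (hτ j) (hj ▸ hu)
    rw [hj] at hstep
    have hdown : S (τ (j + 1)) < u ↔ S (τ (j + 1)) = u - h := by
      constructor <;> intro <;> cases abs_eq hh.le |>.mp hstep <;> linarith
    simp only [hj, true_and, hdown]
    split_ifs with hd <;> simp [hd]
  · simp [hj]

lemma localTimeTerm_mem_Icc (hS : Continuous S) (hh : 0 < h) {a b s u : ℝ}
    (hab : IsLeast (hitSet S h a) b) (hu : u ∈ AddSubgroup.zmultiples h) (hs : s ∈ Ico a b) :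
    localTimeTerm (S a) (S s) u ∈ Icc 0 h := by
  rw [localTimeTerm_eq_ite (eq_or_eq_of_mem_uIcc_of_isLeast_hitSet hS hab
    (Ico_subset_Icc_self hs) hu)]
  split_ifs with hc
  · obtain ⟨rfl, hlt⟩ := hc
    have := abs_sub_lt_of_mem_Ico_of_isLeast_hitSet hS hh hab hu hs
    exact ⟨by linarith, by linarith [neg_abs_le (S s - S a)]⟩
  · exact ⟨le_rfl, hh.le⟩

end LebesguePartition

section Downcrossings

variable {S : ℝ → ℝ} {h t u : ℝ} {τ : ℕ → ℝ} {m : ℕ}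

lemma exists_mem_downcrossingPairs_of_mem_downSteps (hS : Continuous S) (hh : 0 < h)
    (hτ0 : 0 ≤ τ 0) (hτ : ∀ j, IsLeast (hitSet S h (τ j)) (τ (j + 1)))
    (hu : u ∈ AddSubgroup.zmultiples h) (ht : τ m ≤ t) {j : ℕ} (hj : j ∈ downSteps S τ h u m) :
    ∃ p, (p, τ (j + 1)) ∈ downcrossingPairs S t (u - h) u := by
  obtain ⟨hjm, hSj, hSj1⟩ := Finset.mem_filter.mp hj
  have hmono := (strictMono_of_isLeast_hitSet hτ).monotone
  obtain ⟨p, hp, hSp, hin⟩ := exists_downcrossing hS (sub_lt_self u hh) (hτ j).1.1 hSj hSj1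
    fun w hw => by
      have := abs_lt.mp (abs_sub_lt_of_mem_Ico_of_isLeast_hitSet hS hh (hτ j) (hSj ▸ hu) hw)
      linarith [this.1]
  have hj1 : τ (j + 1) ≤ t := (hmono (Finset.mem_range.mp hjm)).trans ht
  have h0 : 0 ≤ τ j := hτ0.trans (hmono j.zero_le)
  exact ⟨p, ⟨h0.trans hp.1, hp.2.le.trans hj1⟩, ⟨h0.trans (hτ j).1.1, hj1⟩, hp.2, hSp, hSj1, hin⟩

lemma exists_mem_downSteps_of_mem_downcrossingPairs (hh : 0 < h) (hτ0 : τ 0 ≤ 0)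
    (hτ : ∀ j, IsLeast (hitSet S h (τ j)) (τ (j + 1))) (hu : u ∈ AddSubgroup.zmultiples h)
    (ht : t < τ (m + 1)) {p q : ℝ} (hpq : (p, q) ∈ downcrossingPairs S t (u - h) u) :
    ∃ j ∈ downSteps S τ h u m, τ (j + 1) = q := by
  obtain ⟨hp, hq, hpq, hSp, hSq, hin⟩ := hpq
  obtain ⟨j, hj⟩ := exists_mem_Ico_succ (hτ0.trans hp.1) ((hpq.trans_le hq.2).trans ht)
  have hSj : S (τ j) = u :=
    (eq_of_mem_Ico_of_isLeast_hitSet (hτ j) hj (by rwa [hSp])).symm.trans hSp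
  have hle : τ (j + 1) ≤ q :=
    (hτ j).2 ⟨hj.1.trans hpq.le, by rw [hSq]; exact sub_mem hu (AddSubgroup.mem_zmultiples h),
      by rw [hSq, hSj]; linarith⟩
  have hq' : τ (j + 1) = q := by
    refine hle.antisymm (not_lt.1 fun hlt => ?_)
    -- `S (τ (j + 1))` would be a lattice point strictly between the adjacent lattice points
    have hin' := hin _ ⟨hj.2, hlt⟩
    have := abs_le_abs_sub_of_mem_zmultiples (hτ j).1.2.1 hu hin'.2.ne
    rw [abs_of_pos hh, abs_of_neg (sub_neg.2 hin'.2)] at this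
    linarith [hin'.1]
  have hjm : j + 1 < m + 1 :=
    (strictMono_of_isLeast_hitSet hτ).lt_iff_lt.mp (hq' ▸ hq.2.trans_lt ht)
  exact ⟨j, Finset.mem_filter.mpr ⟨Finset.mem_range.mpr (by omega), hSj, by rw [hq', hSq]⟩, hq'⟩

lemma ncard_downcrossingPairs (hS : Continuous S) (hh : 0 < h) (hτ0 : τ 0 = 0)
    (hτ : ∀ j, IsLeast (hitSet S h (τ j)) (τ (j + 1))) (hu : u ∈ AddSubgroup.zmultiples h)
    (ht : t ∈ Ico (τ m) (τ (m + 1))) :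
    (downcrossingPairs S t (u - h) u).ncard = (downSteps S τ h u m).card := by
  -- a downcrossing is determined by its end, which is the end of a down step
  have himage : Prod.snd '' downcrossingPairs S t (u - h) u =
      (fun j => τ (j + 1)) '' downSteps S τ h u m := by
    ext q
    constructor
    · rintro ⟨⟨p, q⟩, hpq, rfl⟩
      obtain ⟨j, hj, rfl⟩ :=
        exists_mem_downSteps_of_mem_downcrossingPairs hh hτ0.le hτ hu ht.2 hpq
      exact ⟨j, hj, rfl⟩
    · rintro ⟨j, hj, rfl⟩
      obtain ⟨p, hp⟩ :=
        exists_mem_downcrossingPairs_of_mem_downSteps hS hh hτ0.ge hτ hu ht.1 hj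
      exact ⟨(p, τ (j + 1)), hp, rfl⟩
  rw [← (injOn_snd_downcrossingPairs S t _ _).ncard_image, himage, ← ncard_coe_finset]
  exact ((strictMono_of_isLeast_hitSet hτ).injective.comp Nat.succ_injective).injOn.ncard_image

end Downcrossings

theorem discreteLocalTime_eq_downcrossings_general
    (S : ℝ → ℝ) (hS : Continuous S) (n : ℕ) (T : ℝ)
    (τ : ℕ → ℝ) (hτ0 : τ 0 = 0)
    (hne : ∀ j, {s : ℝ | τ j ≤ s ∧ S s ∈ dyadicGrid n ∧ S s ≠ S (τ j)}.Nonempty)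
    (hτ : ∀ j, τ (j + 1) = sInf {s : ℝ | τ j ≤ s ∧ S s ∈ dyadicGrid n ∧ S s ≠ S (τ j)})
    (k : ℤ) (t : ℝ) (ht : t ∈ Set.Icc 0 T) :
    ∃ ε ∈ Set.Icc (0 : ℝ) (2 ^ (-(n : ℝ))),
      discreteLocalTime S τ t ((k : ℝ) * 2 ^ (-(n : ℝ)))
        = 2 ^ (-(n : ℝ)) *
            (downcrossingPairs S t (((k : ℝ) - 1) * 2 ^ (-(n : ℝ))) ((k : ℝ) * 2 ^ (-(n : ℝ)))).ncard
          + ε := by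
  rw [dyadicGrid_eq_zmultiples] at hne hτ
  set h : ℝ := 2 ^ (-(n : ℝ))
  have hh : 0 < h := by positivity
  have hτ' : ∀ j, IsLeast (hitSet S h (τ j)) (τ (j + 1)) := fun j => by
    rw [hτ j]
    exact isLeast_sInf_hitSet hS hh.ne' (hne j)
  have hu : (k : ℝ) * h ∈ AddSubgroup.zmultiples h := ⟨k, zsmul_eq_mul _ _⟩
  obtain ⟨N, hN⟩ := exists_lt_of_isLeast_hitSet hS hh.ne' hτ' t
  obtain ⟨m, hm⟩ := exists_mem_Ico_succ (hτ0.le.trans ht.1) hN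
  rw [sub_one_mul, discreteLocalTime_eq_sum_add (strictMono_of_isLeast_hitSet hτ').monotone hm,
    sum_localTimeTerm_eq_mul_card hS hh hτ' hu, ncard_downcrossingPairs hS hh hτ0 hτ' hu hm]
  exact ⟨_, localTimeTerm_mem_Icc hS hh (hτ' m) hu hm, rfl⟩

/-- At a dyadic level `u = k2^{-n}`, the discrete local time along the level-`n` dyadic
Lebesgue partition equals `2^{-n}` times the number of downcrossings of
`[u - 2^{-n}, u]`, up to an error `ε ∈ [0, 2^{-n}]`. -/
theorem discreteLocalTime_eq_downcrossings
    (S : ℝ → ℝ) (hS : Continuous S) (n : ℕ) (T : ℝ) (hT : 0 < T)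
    (τ : ℕ → ℝ) (hτ0 : τ 0 = 0)
    (hne : ∀ j, {s : ℝ | τ j ≤ s ∧ S s ∈ dyadicGrid n ∧ S s ≠ S (τ j)}.Nonempty)
    (hτ : ∀ j, τ (j + 1) = sInf {s : ℝ | τ j ≤ s ∧ S s ∈ dyadicGrid n ∧ S s ≠ S (τ j)})
    (k : ℤ) (t : ℝ) (ht : t ∈ Set.Icc 0 T)
    (hD : (downcrossingPairs S t (((k : ℝ) - 1) * 2 ^ (-(n : ℝ))) ((k : ℝ) * 2 ^ (-(n : ℝ)))).Finite) :
    ∃ ε ∈ Set.Icc (0 : ℝ) (2 ^ (-(n : ℝ))),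
      discreteLocalTime S τ t ((k : ℝ) * 2 ^ (-(n : ℝ)))
        = 2 ^ (-(n : ℝ)) *
            (downcrossingPairs S t (((k : ℝ) - 1) * 2 ^ (-(n : ℝ))) ((k : ℝ) * 2 ^ (-(n : ℝ)))).ncard
          + ε :=
  discreteLocalTime_eq_downcrossings_general S hS n T τ hτ0 hne hτ k t ht
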